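/- arXiv:1808.08619 — 8 statements merged into one kernel-verified Lean document; each statement's English description precedes it below -/
import Mathlib

section
/- Let C be a finite type and let μ be a joint distribution on C × C × Bool (construct, prediction, protected attribute) with Pr[Z = z] > 0 for both z. If μ satisfies demographic parity, then the construct accuracy of μ, namely (1/2)(Pr[construct = prediction | Z = 0] + Pr[construct = prediction | Z = 1]), is at most 1 − (1/2) · dTV(construct | Z = 0, construct | Z = 1). -/
/-- A probability distribution on a finite type: nonnegative and summing to 1. -/
def IsDist {Y : Type*} [Fintype Y] (p : Y → ℝ) : Prop :=
  (∀ y, 0 ≤ p y) ∧ ∑ y, p y = 1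

/-- Total variation distance between two distributions on a finite type. -/
noncomputable def dTV {Y : Type*} [Fintype Y] (p q : Y → ℝ) : ℝ :=
  (1 / 2) * ∑ y, |p y - q y|

/-- In a joint distribution `μ` on construct × prediction × protected attribute,
the probability that the protected attribute `Z` equals `z`. -/
def prZ {C P : Type*} [Fintype C] [Fintype P] (μ : C × P × Bool → ℝ) (z : Bool) : ℝ :=
  ∑ c, ∑ p, μ (c, p, z)

/-- The conditional distribution of the prediction given `Z = z`. -/
noncomputable def predCond {C P : Type*} [Fintype C] [Fintype P]
    (μ : C × P × Bool → ℝ) (z : Bool) : P → ℝ :=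
  fun p => (∑ c, μ (c, p, z)) / prZ μ z

/-- The conditional distribution of the construct given `Z = z`. -/
noncomputable def consCond {C P : Type*} [Fintype C] [Fintype P]
    (μ : C × P × Bool → ℝ) (z : Bool) : C → ℝ :=
  fun c => (∑ p, μ (c, p, z)) / prZ μ z

/-- The probability that the construct equals the prediction, conditioned on `Z = z`. -/
noncomputable def prAgree {C : Type*} [Fintype C] (μ : C × C × Bool → ℝ) (z : Bool) : ℝ :=
  (∑ c, μ (c, c, z)) / prZ μ z

/-- The construct accuracy of a model: the average of the two group-conditional
probabilities that the construct equals the prediction. -/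
noncomputable def constructAccuracy {C : Type*} [Fintype C] (μ : C × C × Bool → ℝ) : ℝ :=
  (1 / 2) * (prAgree μ false + prAgree μ true)

/-- If a model satisfies demographic parity, its construct accuracy is at
most `1 - (1/2) · dTV(construct | Z=0, construct | Z=1)`. -/
theorem demographic_parity_accuracy_bound
    {C : Type*} [Fintype C] (μ : C × C × Bool → ℝ)
    (hμ : IsDist μ) (hZ : ∀ z, 0 < prZ μ z)
    (hdp : predCond μ false = predCond μ true) :
    constructAccuracy μ ≤ 1 - (1 / 2) * dTV (consCond μ false) (consCond μ true) := by
  obtain ⟨hnn, hsum⟩ := hμ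
  have hpt : ∀ a b q : ℝ, min a q + min b q ≤ q + (a + b - |a - b|) / 2 := by
    intro a b q
    rcases le_total a b with h | h
    · rw [abs_of_nonpos (by linarith)]
      have h1 : min a q ≤ a := min_le_left a q
      have h2 : min b q ≤ q := min_le_right b q
      linarith
    · rw [abs_of_nonneg (by linarith)]
      have h1 : min a q ≤ q := min_le_right a q
      have h2 : min b q ≤ b := min_le_left b q
      linarith
  have hsumcons : ∀ z, ∑ c, consCond μ z c = 1 := by
    intro z
    simp only [consCond]
    rw [← Finset.sum_div]
    exact div_self (ne_of_gt (hZ z))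
  have hsumpred : ∀ z, ∑ p, predCond μ z p = 1 := by
    intro z
    simp only [predCond]
    rw [← Finset.sum_div, Finset.sum_comm]
    exact div_self (ne_of_gt (hZ z))
  have hagree : ∀ z, prAgree μ z ≤ ∑ c, min (consCond μ z c) (predCond μ z c) := by
    intro z
    have hnum : ∑ c, μ (c, c, z) ≤ ∑ c, min (∑ p, μ (c, p, z)) (∑ c', μ (c', c, z)) := by
      apply Finset.sum_le_sum
      intro c _
      refine le_min ?_ ?_
      · exact Finset.single_le_sum (fun p _ => hnn (c, p, z)) (Finset.mem_univ c)
      · exact Finset.single_le_sum (fun c' _ => hnn (c', c, z)) (Finset.mem_univ c)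
    calc prAgree μ z ≤ (∑ c, min (∑ p, μ (c, p, z)) (∑ c', μ (c', c, z))) / prZ μ z := by
          exact (div_le_div_iff_of_pos_right (hZ z)).mpr hnum
      _ = ∑ c, min (consCond μ z c) (predCond μ z c) := by
          rw [Finset.sum_div]
          refine Finset.sum_congr rfl fun c _ => ?_
          simp only [consCond, predCond]
          rw [min_div_div_right (hZ z).le]
  have key : prAgree μ false + prAgree μ true ≤
      2 - (1 / 2) * ∑ c, |consCond μ false c - consCond μ true c| := by
    have h0 := hagree false
    have h1 := hagree true
    rw [hdp] at h0
    have hcomb : (∑ c, min (consCond μ false c) (predCond μ true c)) +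
        (∑ c, min (consCond μ true c) (predCond μ true c)) ≤
        (∑ c, predCond μ true c) +
        ((∑ c, consCond μ false c) + (∑ c, consCond μ true c)
          - ∑ c, |consCond μ false c - consCond μ true c|) / 2 := by
      rw [← Finset.sum_add_distrib]
      have : (∑ c, predCond μ true c) +
          ((∑ c, consCond μ false c) + (∑ c, consCond μ true c)
            - ∑ c, |consCond μ false c - consCond μ true c|) / 2 =
          ∑ c, (predCond μ true c + (consCond μ false c + consCond μ true c
            - |consCond μ false c - consCond μ true c|) / 2) := by
        rw [← Finset.sum_add_distrib, ← Finset.sum_sub_distrib, Finset.sum_div,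
          ← Finset.sum_add_distrib]
      rw [this]
      exact Finset.sum_le_sum fun c _ => hpt _ _ _
    rw [hsumpred true, hsumcons false, hsumcons true] at hcomb
    linarith
  simp only [constructAccuracy, dTV]
  linarith
end

section
/- Let C and P be finite types and let μ be a joint distribution on C × P × Bool with Pr[Z = z] > 0 for both z. Suppose there is a Markov kernel K : C → P → ℝ (K c p ≥ 0, ∑_p K c p = 1 for every c) such that μ(c, p, z) = (∑_{p'} μ(c, p', z)) · K c p for all c, p, z (this expresses that the model satisfies equalized odds and the WYSIWYG worldview holds, i.e., the prediction depends on the construct through the same kernel in both groups). Then dTV(prediction | Z = 0, prediction | Z = 1) ≤ dTV(construct | Z = 0, construct | Z = 1), i.e., the model does not exhibit disparity amplification. -/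
/-- If the prediction depends on the construct through the same Markov
kernel in both protected groups (expressing equalized odds together with the WYSIWYG
worldview), then the model does not exhibit disparity amplification:
`dTV(prediction | Z=0, prediction | Z=1) ≤ dTV(construct | Z=0, construct | Z=1)`. -/
theorem wysiwyg_equalized_odds_no_disparity_amplification
    {C P : Type*} [Fintype C] [Fintype P] (μ : C × P × Bool → ℝ)
    (hμ : IsDist μ) (hZ : ∀ z, 0 < prZ μ z)
    (K : C → P → ℝ) (hK0 : ∀ c p, 0 ≤ K c p) (hK1 : ∀ c, ∑ p, K c p = 1)
    (hfac : ∀ c p z, μ (c, p, z) = (∑ p', μ (c, p', z)) * K c p) :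
    dTV (predCond μ false) (predCond μ true) ≤ dTV (consCond μ false) (consCond μ true) := by
  have key : ∀ z p, predCond μ z p = ∑ c, consCond μ z c * K c p := by
    intro z p
    simp only [predCond, consCond]
    rw [Finset.sum_div]
    refine Finset.sum_congr rfl fun c _ => ?_
    rw [hfac c p z, div_mul_eq_mul_div]
  unfold dTV
  have h2 : (0:ℝ) < 2 := by norm_num
  rw [div_mul_eq_mul_div, div_mul_eq_mul_div, one_mul, one_mul, div_le_div_iff_of_pos_right h2]
  calc ∑ p, |predCond μ false p - predCond μ true p|
      = ∑ p, |∑ c, (consCond μ false c - consCond μ true c) * K c p| := by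
        refine Finset.sum_congr rfl fun p _ => ?_
        rw [key, key, ← Finset.sum_sub_distrib]
        congr 1; refine Finset.sum_congr rfl fun c _ => ?_; ring
    _ ≤ ∑ p, ∑ c, |consCond μ false c - consCond μ true c| * K c p := by
        refine Finset.sum_le_sum fun p _ => ?_
        refine (Finset.abs_sum_le_sum_abs _ _).trans ?_
        refine le_of_eq (Finset.sum_congr rfl fun c _ => ?_)
        rw [abs_mul, abs_of_nonneg (hK0 c p)]
    _ = ∑ c, |consCond μ false c - consCond μ true c| := by
        rw [Finset.sum_comm]
        refine Finset.sum_congr rfl fun c _ => ?_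
        rw [← Finset.mul_sum, hK1, mul_one]
end

section
/- Let Y be a finite type and let μ be a joint distribution on Y × Y × Y × Bool whose coordinates represent the construct, the observation, the prediction, and the protected attribute Z, with Pr[Z = z] > 0 for both z. Suppose the WYSIWYG worldview holds (the construct equals the observation with probability 1) and the model is construct optimal (the prediction equals the construct with probability 1). Then the model passes the equalized odds test: for all yo, yp and both z with Pr[observation = yo ∧ Z = z] > 0, the conditional probability Pr[prediction = yp | observation = yo ∧ Z = z] equals the indicator that yp = yo; in particular it is the same for z = 0 and z = 1. -/
/-- In a joint distribution on construct × observation × prediction × Z,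
the probability of the event `observation = yo ∧ Z = z`. -/
def prObsZ {Y : Type*} [Fintype Y] (μ : Y × Y × Y × Bool → ℝ) (yo : Y) (z : Bool) : ℝ :=
  ∑ c, ∑ p, μ (c, yo, p, z)

/-- The probability of the event `prediction = yp ∧ observation = yo ∧ Z = z`. -/
def prPredObsZ {Y : Type*} [Fintype Y] (μ : Y × Y × Y × Bool → ℝ)
    (yp yo : Y) (z : Bool) : ℝ :=
  ∑ c, μ (c, yo, yp, z)

/-- If the WYSIWYG worldview holds (construct = observation with
probability 1) and the model is construct optimal (prediction = construct with
probability 1), then the model passes the equalized odds test: whenever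
`Pr[observation = yo ∧ Z = z] > 0`, the conditional probability
`Pr[prediction = yp | observation = yo ∧ Z = z]` equals the indicator of `yp = yo`;
in particular it is the same for `z = false` and `z = true`. -/
theorem wysiwyg_construct_optimal_equalized_odds
    {Y : Type*} [Fintype Y] [DecidableEq Y] (μ : Y × Y × Y × Bool → ℝ)
    (hμ : IsDist μ) (hZ : ∀ z : Bool, 0 < ∑ c, ∑ o, ∑ p, μ (c, o, p, z))
    (hwysiwyg : ∀ c o p z, c ≠ o → μ (c, o, p, z) = 0)
    (hopt : ∀ c o p z, p ≠ c → μ (c, o, p, z) = 0) :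
    ∀ (yo yp : Y) (z : Bool), 0 < prObsZ μ yo z →
      prPredObsZ μ yp yo z / prObsZ μ yo z = if yp = yo then 1 else 0 := by
  intro yo yp z hpos
  by_cases h : yp = yo
  · subst h
    rw [if_pos rfl]
    have hkey : prPredObsZ μ yp yp z = prObsZ μ yp z := by
      unfold prPredObsZ prObsZ
      congr 1
      ext c
      by_cases hc : c = yp
      · subst hc
        rw [Finset.sum_eq_single c]
        · intro b _ hb; exact hopt c c b z hb
        · intro h; exact absurd (Finset.mem_univ c) h
      · rw [hwysiwyg c yp yp z hc]
        exact (Finset.sum_eq_zero fun p _ => hwysiwyg c yp p z hc).symm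
    rw [hkey, div_self (ne_of_gt hpos)]
  · rw [if_neg h]
    have : prPredObsZ μ yp yo z = 0 := by
      unfold prPredObsZ
      apply Finset.sum_eq_zero
      intro c _
      by_cases hc : c = yo
      · exact hopt c yo yp z (hc ▸ h)
      · exact hwysiwyg c yo yp z hc
    rw [this, zero_div]
end

section
/- Let O be a finite type, let o0 and o1 be distributions on O with o0 y > 0 and o1 y > 0 for every y ∈ O, and let w0, w1 > 0 with w0 + w1 = 1. Then there exists ε0 > 0 such that for every ε with 0 < ε ≤ ε0 there exists a joint distribution μ on O × Bool × Bool (observation, prediction, protected attribute Z) satisfying: Pr[Z = z] = w_z; the conditional distribution of the observation given Z = z is o_z; Pr[prediction = yp ∧ Z = z] > 0 for all yp, z; μ passes the predictive parity test, i.e., Pr[observation = yo | prediction = yp ∧ Z = 0] = Pr[observation = yo | prediction = yp ∧ Z = 1] for all yo, yp; and the output disparity satisfies dTV(prediction | Z = 0, prediction | Z = 1) = 1 − ε. -/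
/-- In a joint distribution on observation × prediction × Z (prediction Bool-valued),
the probability of the event `prediction = yp ∧ Z = z`. -/
def prPredZ {O : Type*} [Fintype O] (μ : O × Bool × Bool → ℝ) (yp z : Bool) : ℝ :=
  ∑ yo, μ (yo, yp, z)

/-! A model in which `Z → prediction → observation` is a Markov chain passes the predictive parity
test automatically, since the observation depends on `Z` only through the prediction. Let the
prediction copy `Z` except for a flip with probability `t = ε / 2`; its disparity is then
`1 - 2t = 1 - ε`. It remains to choose the laws `q₀, q₁` of the observation given the prediction
so that `(1 - t) q₀ + t q₁ = o₀` and `t q₀ + (1 - t) q₁ = o₁`. Solving this 2 × 2 system gives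
`q₀ = ((1 - t) o₀ - t o₁) / (1 - 2t)` and symmetrically for `q₁`; these are distributions once `t`
is small compared with every `o_z y`, which is where the strict positivity of `o₀, o₁` enters. -/

open Finset

lemma exists_pos_le_of_forall_pos {α : Type*} [Finite α] {f : α → ℝ} (hf : ∀ a, 0 < f a) :
    ∃ m, 0 < m ∧ ∀ a, m ≤ f a := by
  cases isEmpty_or_nonempty α
  · exact ⟨1, one_pos, isEmptyElim⟩
  · obtain ⟨a, ha⟩ := Finite.exists_min f
    exact ⟨f a, hf a, ha⟩

lemma IsDist.le_one {Y : Type*} [Fintype Y] {p : Y → ℝ} (hp : IsDist p) (y : Y) : p y ≤ 1 :=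
  (single_le_sum (f := p) (fun i _ => hp.1 i) (mem_univ y)).trans_eq hp.2

lemma sum_eq_sum_prZ {C P : Type*} [Fintype C] [Fintype P] (μ : C × P × Bool → ℝ) :
    ∑ x, μ x = ∑ z, prZ μ z := by
  simp only [prZ, Fintype.sum_prod_type]
  conv_rhs => rw [sum_comm]
  exact sum_congr rfl fun _ _ => sum_comm

section Unmix

variable {Y : Type*}

/-- The solution `u` of `(1 - t) u + t v = p`, `t u + (1 - t) v = q`, namely `u = unmix t p q`
and `v = unmix t q p`. -/
noncomputable def unmix (t : ℝ) (p q : Y → ℝ) : Y → ℝ :=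
  fun y => ((1 - t) * p y - t * q y) / (1 - 2 * t)

lemma unmix_mix {t : ℝ} (ht : 1 - 2 * t ≠ 0) (p q : Y → ℝ) (y : Y) :
    (1 - t) * unmix t p q y + t * unmix t q p y = p y := by
  simp only [unmix]
  rw [mul_div_assoc', mul_div_assoc', ← add_div, div_eq_iff ht]
  ring

lemma isDist_unmix [Fintype Y] {t : ℝ} (ht : t < 1 / 2) {p q : Y → ℝ} (hp : IsDist p)
    (hq : IsDist q) (hpt : ∀ y, 2 * t ≤ p y) : IsDist (unmix t p q) := by
  have h2t : 0 < 1 - 2 * t := by linarith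
  refine ⟨fun y => div_nonneg (sub_nonneg.2 ?_) h2t.le, ?_⟩
  · nlinarith [hp.1 y, hq.1 y, hq.le_one y, hpt y]
  simp only [unmix]
  rw [← sum_div, sum_sub_distrib, ← mul_sum, ← mul_sum, hp.2, hq.2, div_eq_one_iff_eq h2t.ne']
  ring

end Unmix

def chainModel {C P : Type*} (w : Bool → ℝ) (k : Bool → P → ℝ) (q : P → C → ℝ) :
    C × P × Bool → ℝ :=
  fun x => w x.2.2 * k x.2.2 x.2.1 * q x.2.1 x.1

section ChainModel

variable {C P : Type*} [Fintype C] {w : Bool → ℝ} {k : Bool → P → ℝ} {q : P → C → ℝ}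

lemma sum_chainModel_fst (hq : ∀ p, ∑ c, q p c = 1) (p : P) (z : Bool) :
    ∑ c, chainModel w k q (c, p, z) = w z * k z p := by
  simp only [chainModel, ← mul_sum, hq, mul_one]

lemma prZ_chainModel [Fintype P] (hk : ∀ z, ∑ p, k z p = 1) (hq : ∀ p, ∑ c, q p c = 1)
    (z : Bool) : prZ (chainModel w k q) z = w z := by
  rw [prZ, sum_comm]
  simp only [sum_chainModel_fst hq, ← mul_sum, hk, mul_one]

lemma isDist_chainModel [Fintype P] (hw : IsDist w) (hk : ∀ z, IsDist (k z))
    (hq : ∀ p, IsDist (q p)) : IsDist (chainModel w k q) := by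
  refine ⟨fun x => mul_nonneg (mul_nonneg (hw.1 _) ((hk _).1 _)) ((hq _).1 _), ?_⟩
  simp only [sum_eq_sum_prZ, prZ_chainModel (fun z => (hk z).2) (fun p => (hq p).2), hw.2]

lemma consCond_chainModel [Fintype P] (hk : ∀ z, ∑ p, k z p = 1) (hq : ∀ p, ∑ c, q p c = 1)
    {z : Bool} (hz : w z ≠ 0) : consCond (chainModel w k q) z = fun c => ∑ p, k z p * q p c := by
  ext c
  simp only [consCond, prZ_chainModel hk hq, chainModel, mul_assoc, ← mul_sum]
  field_simp

lemma predCond_chainModel [Fintype P] (hk : ∀ z, ∑ p, k z p = 1) (hq : ∀ p, ∑ c, q p c = 1)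
    {z : Bool} (hz : w z ≠ 0) : predCond (chainModel w k q) z = k z := by
  ext p
  rw [predCond, sum_chainModel_fst hq, prZ_chainModel hk hq]
  field_simp

lemma prPredZ_chainModel {k : Bool → Bool → ℝ} {q : Bool → C → ℝ} (hq : ∀ p, ∑ c, q p c = 1)
    (yp z : Bool) : prPredZ (chainModel w k q) yp z = w z * k z yp :=
  sum_chainModel_fst hq yp z

lemma chainModel_div_prPredZ {k : Bool → Bool → ℝ} {q : Bool → C → ℝ}
    (hq : ∀ p, ∑ c, q p c = 1) {yp z : Bool} (hpz : w z * k z yp ≠ 0) (c : C) :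
    chainModel w k q (c, yp, z) / prPredZ (chainModel w k q) yp z = q yp c := by
  rw [prPredZ_chainModel hq, chainModel, mul_div_cancel_left₀ _ hpz]

end ChainModel

def flipKernel (t : ℝ) (z p : Bool) : ℝ :=
  if p = z then 1 - t else t

lemma sum_flipKernel (t : ℝ) (z : Bool) : ∑ p, flipKernel t z p = 1 := by
  cases z <;> simp [flipKernel]

lemma isDist_flipKernel {t : ℝ} (ht₀ : 0 ≤ t) (ht₁ : t ≤ 1) (z : Bool) :
    IsDist (flipKernel t z) := by
  refine ⟨fun p => ?_, sum_flipKernel t z⟩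
  unfold flipKernel
  split_ifs <;> linarith

lemma flipKernel_pos {t : ℝ} (ht₀ : 0 < t) (ht₁ : t < 1) (z p : Bool) :
    0 < flipKernel t z p := by
  unfold flipKernel
  split_ifs <;> linarith

lemma sum_flipKernel_mul_unmix {Y : Type*} {t : ℝ} (ht : 1 - 2 * t ≠ 0) (o : Bool → Y → ℝ)
    (z : Bool) (y : Y) : ∑ p, flipKernel t z p * unmix t (o p) (o !p) y = o z y := by
  cases z
  · simp only [Fintype.sum_bool, flipKernel, Bool.true_eq_false, ↓reduceIte, Bool.not_true,
      Bool.not_false]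
    linarith [unmix_mix ht (o false) (o true) y]
  · simp only [Fintype.sum_bool, flipKernel, Bool.false_eq_true, ↓reduceIte, Bool.not_true,
      Bool.not_false]
    linarith [unmix_mix ht (o true) (o false) y]

lemma dTV_flipKernel (t : ℝ) : dTV (flipKernel t false) (flipKernel t true) = |1 - 2 * t| := by
  simp only [dTV, Fintype.sum_bool, flipKernel, Bool.true_eq_false, Bool.false_eq_true,
    ↓reduceIte]
  rw [show t - (1 - t) = -(1 - 2 * t) by ring, abs_neg, show 1 - t - t = 1 - 2 * t by ring]
  ring

/-- Given strictly positive observed distributions `o0, o1` for the two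
groups and group weights `w0, w1 > 0` with `w0 + w1 = 1`, there exists `ε0 > 0` such
that for every `0 < ε ≤ ε0` there is a model (joint distribution on
observation × prediction × Z) realizing these marginals, giving every
(prediction, group) pair positive probability, passing the predictive parity test, and
having output disparity `dTV(prediction | Z=0, prediction | Z=1) = 1 - ε`. -/
theorem predictive_parity_allows_arbitrary_output_disparity
    {O : Type*} [Fintype O] (o0 o1 : O → ℝ) (ho0 : IsDist o0) (ho1 : IsDist o1)
    (ho0pos : ∀ y, 0 < o0 y) (ho1pos : ∀ y, 0 < o1 y)
    (w0 w1 : ℝ) (hw0 : 0 < w0) (hw1 : 0 < w1) (hw : w0 + w1 = 1) :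
    ∃ ε0 : ℝ, 0 < ε0 ∧ ∀ ε : ℝ, 0 < ε → ε ≤ ε0 →
      ∃ μ : O × Bool × Bool → ℝ, IsDist μ ∧
        prZ μ false = w0 ∧ prZ μ true = w1 ∧
        consCond μ false = o0 ∧ consCond μ true = o1 ∧
        (∀ yp z : Bool, 0 < prPredZ μ yp z) ∧
        (∀ (yo : O) (yp : Bool),
          μ (yo, yp, false) / prPredZ μ yp false = μ (yo, yp, true) / prPredZ μ yp true) ∧
        dTV (predCond μ false) (predCond μ true) = 1 - ε := by
  obtain ⟨m, hm, hmo⟩ := exists_pos_le_of_forall_pos fun y => lt_min (ho0pos y) (ho1pos y)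
  refine ⟨min m (1 / 2), lt_min hm one_half_pos, fun ε hε hεε0 => ?_⟩
  obtain ⟨t, rfl⟩ : ∃ t, ε = 2 * t := ⟨ε / 2, by ring⟩
  have ht : t < 1 / 2 := by linarith [min_le_right m (1 / 2)]
  let o : Bool → O → ℝ := fun z => if z then o1 else o0
  have ho : ∀ z, IsDist (o z) := by rintro (_ | _) <;> assumption
  have hto : ∀ z y, 2 * t ≤ o z y := fun z y => by
    have := (hεε0.trans (min_le_left _ _)).trans (hmo y)
    cases z <;> simp_all [o]
  let w : Bool → ℝ := fun z => if z then w1 else w0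
  have hw₀ : ∀ z, 0 < w z := by rintro (_ | _) <;> assumption
  have hw₁ : IsDist w := ⟨fun z => (hw₀ z).le, by simp [w, add_comm, hw]⟩
  have hq : ∀ p, IsDist (unmix t (o p) (o !p)) := fun p => isDist_unmix ht (ho p) (ho !p) (hto p)
  have hq₁ : ∀ p, ∑ y, unmix t (o p) (o !p) y = 1 := fun p => (hq p).2
  have hk := sum_flipKernel t
  have hpos : ∀ yp z, 0 < w z * flipKernel t z yp := fun yp z =>
    mul_pos (hw₀ z) (flipKernel_pos (by linarith) (by linarith) z yp)
  refine ⟨chainModel w (flipKernel t) fun p => unmix t (o p) (o !p),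
    isDist_chainModel hw₁ (isDist_flipKernel (by linarith) (by linarith)) hq,
    prZ_chainModel hk hq₁ false, prZ_chainModel hk hq₁ true,
    (consCond_chainModel hk hq₁ (hw₀ false).ne').trans
      (funext (sum_flipKernel_mul_unmix (by linarith) o false)),
    (consCond_chainModel hk hq₁ (hw₀ true).ne').trans
      (funext (sum_flipKernel_mul_unmix (by linarith) o true)),
    fun yp z => (prPredZ_chainModel hq₁ yp z).symm ▸ hpos yp z,
    fun yo yp => ?_, ?_⟩
  · rw [chainModel_div_prPredZ hq₁ (hpos yp false).ne',
      chainModel_div_prPredZ hq₁ (hpos yp true).ne']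
  · rw [predCond_chainModel hk hq₁ (hw₀ false).ne', predCond_chainModel hk hq₁ (hw₀ true).ne',
      dTV_flipKernel, abs_of_pos (by linarith)]
end

section
/- Let C and P be finite types and let μ be a joint distribution on C × P × Bool with Pr[Z = z] > 0 for both z. Suppose there is a Markov kernel L : P → C → ℝ (L p c ≥ 0, ∑_c L p c = 1 for every p) such that μ(c, p, z) = (∑_{c'} μ(c', p, z)) · L p c for all c, p, z (this expresses that the model satisfies predictive parity and the WYSIWYG worldview holds). Then dTV(prediction | Z = 0, prediction | Z = 1) ≥ dTV(construct | Z = 0, construct | Z = 1). -/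
/-- If the construct depends on the prediction through the same Markov
kernel in both protected groups (expressing predictive parity together with the
WYSIWYG worldview), then
`dTV(prediction | Z=0, prediction | Z=1) ≥ dTV(construct | Z=0, construct | Z=1)`. -/
theorem wysiwyg_predictive_parity_disparity_ge
    {C P : Type*} [Fintype C] [Fintype P] (μ : C × P × Bool → ℝ)
    (hμ : IsDist μ) (hZ : ∀ z, 0 < prZ μ z)
    (L : P → C → ℝ) (hL0 : ∀ p c, 0 ≤ L p c) (hL1 : ∀ p, ∑ c, L p c = 1)
    (hfac : ∀ c p z, μ (c, p, z) = (∑ c', μ (c', p, z)) * L p c) :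
    dTV (consCond μ false) (consCond μ true) ≤ dTV (predCond μ false) (predCond μ true) := by
  have key : ∀ z c, consCond μ z c = ∑ p, predCond μ z p * L p c := by
    intro z c
    unfold consCond predCond
    rw [Finset.sum_div]
    refine Finset.sum_congr rfl fun p _ => ?_
    rw [hfac c p z]; ring
  unfold dTV
  have h1 : ∀ c, |consCond μ false c - consCond μ true c|
      ≤ ∑ p, |predCond μ false p - predCond μ true p| * L p c := by
    intro c
    rw [key, key, ← Finset.sum_sub_distrib]
    refine (Finset.abs_sum_le_sum_abs _ _).trans ?_
    refine Finset.sum_le_sum fun p _ => ?_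
    rw [← sub_mul, abs_mul, abs_of_nonneg (hL0 p c)]
  calc (1/2 : ℝ) * ∑ c, |consCond μ false c - consCond μ true c|
      ≤ (1/2) * ∑ c, ∑ p, |predCond μ false p - predCond μ true p| * L p c := by
        gcongr with c _; exact h1 c
    _ = (1/2) * ∑ p, |predCond μ false p - predCond μ true p| := by
        rw [Finset.sum_comm]
        congr 1
        refine Finset.sum_congr rfl fun p _ => ?_
        rw [← Finset.mul_sum, hL1 p, mul_one]
end

section
/- Let C, O, P be finite types, let α ∈ [0, 1], and let μ be a joint distribution on C × O × P × Bool (construct, observation, prediction, protected attribute) with Pr[Z = z] > 0 for both z. (a) If the α-Hybrid worldview holds, i.e., dTV(construct | Z = 0, construct | Z = 1) = α · dTV(observation | Z = 0, observation | Z = 1), and μ passes the α-disparity test, i.e., dTV(prediction | Z = 0, prediction | Z = 1) ≤ α · dTV(observation | Z = 0, observation | Z = 1), then μ does not exhibit disparity amplification: dTV(prediction | Z = 0, prediction | Z = 1) ≤ dTV(construct | Z = 0, construct | Z = 1). (b) If the α-Hybrid worldview holds and μ is construct optimal (P = C and the prediction equals the construct with probability 1), then μ passes the α-disparity test with equality.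 -/
/-- In a joint distribution on construct × observation × prediction × Z,
the probability that `Z = z`. -/
def prZ4 {C O P : Type*} [Fintype C] [Fintype O] [Fintype P]
    (μ : C × O × P × Bool → ℝ) (z : Bool) : ℝ :=
  ∑ c, ∑ o, ∑ p, μ (c, o, p, z)

/-- The conditional distribution of the construct given `Z = z`. -/
noncomputable def cons4 {C O P : Type*} [Fintype C] [Fintype O] [Fintype P]
    (μ : C × O × P × Bool → ℝ) (z : Bool) : C → ℝ :=
  fun c => (∑ o, ∑ p, μ (c, o, p, z)) / prZ4 μ z

/-- The conditional distribution of the observation given `Z = z`. -/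
noncomputable def obs4 {C O P : Type*} [Fintype C] [Fintype O] [Fintype P]
    (μ : C × O × P × Bool → ℝ) (z : Bool) : O → ℝ :=
  fun o => (∑ c, ∑ p, μ (c, o, p, z)) / prZ4 μ z

/-- The conditional distribution of the prediction given `Z = z`. -/
noncomputable def pred4 {C O P : Type*} [Fintype C] [Fintype O] [Fintype P]
    (μ : C × O × P × Bool → ℝ) (z : Bool) : P → ℝ :=
  fun p => (∑ c, ∑ o, μ (c, o, p, z)) / prZ4 μ z

/-- Let `α ∈ [0,1]`.
(a) If the α-Hybrid worldview holds and the model passes the α-disparity test, then the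
model does not exhibit disparity amplification.
(b) If the α-Hybrid worldview holds and the model is construct optimal (prediction
takes values in the construct type and equals the construct with probability 1), then
the model passes the α-disparity test with equality. -/
theorem alpha_hybrid_alpha_disparity
    {C O P : Type*} [Fintype C] [Fintype O] [Fintype P]
    (α : ℝ) (hα0 : 0 ≤ α) (hα1 : α ≤ 1) :
    (∀ μ : C × O × P × Bool → ℝ, IsDist μ → (∀ z, 0 < prZ4 μ z) →
      dTV (cons4 μ false) (cons4 μ true) = α * dTV (obs4 μ false) (obs4 μ true) →
      dTV (pred4 μ false) (pred4 μ true) ≤ α * dTV (obs4 μ false) (obs4 μ true) →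
      dTV (pred4 μ false) (pred4 μ true) ≤ dTV (cons4 μ false) (cons4 μ true)) ∧
    (∀ μ : C × O × C × Bool → ℝ, IsDist μ → (∀ z, 0 < prZ4 μ z) →
      dTV (cons4 μ false) (cons4 μ true) = α * dTV (obs4 μ false) (obs4 μ true) →
      (∀ c o p z, p ≠ c → μ (c, o, p, z) = 0) →
      dTV (pred4 μ false) (pred4 μ true) = α * dTV (obs4 μ false) (obs4 μ true)) := by
  constructor
  · intro μ _ _ hhyb hpass
    rw [hhyb]; exact hpass
  · intro μ _ _ hhyb hopt
    have key : ∀ z, pred4 μ z = cons4 μ z := by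
      intro z
      funext c
      unfold pred4 cons4
      congr 1
      rw [Finset.sum_comm]
      apply Finset.sum_congr rfl
      intro o _
      apply Finset.sum_congr rfl
      intro c' _
      by_cases h : c' = c
      · subst h; rfl
      · rw [hopt c' o c z (Ne.symm h), hopt c o c' z h]
    rw [key false, key true, hhyb]
end

section
/- Let C and O be finite types, let 0 ≤ α' < α ≤ 1, and let μ be a joint distribution on C × O × C × Bool (construct, observation, prediction, protected attribute) with Pr[Z = z] > 0 for both z, where the prediction takes values in the same type C as the construct. Suppose the α-Hybrid worldview holds, i.e., dTV(construct | Z = 0, construct | Z = 1) = α · dTV(observation | Z = 0, observation | Z = 1), and μ passes the α'-disparity test, i.e., dTV(prediction | Z = 0, prediction | Z = 1) ≤ α' · dTV(observation | Z = 0, observation | Z = 1). Then the construct accuracy of μ is at most 1 − (1/2)(α − α') · dTV(observation | Z = 0, observation | Z = 1). -/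
/-- The probability that the construct equals the prediction, conditioned on `Z = z`,
for a model whose prediction takes values in the construct type. -/
noncomputable def prAgree4 {C O : Type*} [Fintype C] [Fintype O]
    (μ : C × O × C × Bool → ℝ) (z : Bool) : ℝ :=
  (∑ c, ∑ o, μ (c, o, c, z)) / prZ4 μ z

/-- The construct accuracy of the model. -/
noncomputable def constructAccuracy4 {C O : Type*} [Fintype C] [Fintype O]
    (μ : C × O × C × Bool → ℝ) : ℝ :=
  (1 / 2) * (prAgree4 μ false + prAgree4 μ true)

lemma dTV_symm' {Y : Type*} [Fintype Y] (p q : Y → ℝ) : dTV p q = dTV q p := by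
  unfold dTV
  congr 1
  exact Finset.sum_congr rfl fun y _ => abs_sub_comm _ _

lemma dTV_triangle' {Y : Type*} [Fintype Y] (p q r : Y → ℝ) :
    dTV p r ≤ dTV p q + dTV q r := by
  unfold dTV
  rw [← mul_add]
  apply mul_le_mul_of_nonneg_left _ (by norm_num : (0:ℝ) ≤ 1/2)
  rw [← Finset.sum_add_distrib]
  exact Finset.sum_le_sum fun y _ => abs_sub_le _ _ _

lemma sum_min_eq_one_sub_dTV {Y : Type*} [Fintype Y] (p q : Y → ℝ)
    (hp : ∑ y, p y = 1) (hq : ∑ y, q y = 1) :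
    ∑ y, min (p y) (q y) = 1 - dTV p q := by
  have h : ∀ y, min (p y) (q y) = (p y + q y - |p y - q y|) / 2 := by
    intro y
    rcases le_total (p y) (q y) with h | h
    · rw [min_eq_left h, abs_of_nonpos (by linarith)]; ring
    · rw [min_eq_right h, abs_of_nonneg (by linarith)]; ring
  simp only [h]
  rw [show (∑ y, (p y + q y - |p y - q y|) / 2)
        = (∑ y, (p y + q y - |p y - q y|)) / 2 from (Finset.sum_div _ _ _).symm,
     Finset.sum_sub_distrib, Finset.sum_add_distrib, hp, hq]
  unfold dTV
  ring

lemma cons4_isDist {C O P : Type*} [Fintype C] [Fintype O] [Fintype P]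
    (μ : C × O × P × Bool → ℝ) (hμ : ∀ x, 0 ≤ μ x) (z : Bool) (hZ : 0 < prZ4 μ z) :
    (∀ c, 0 ≤ cons4 μ z c) ∧ ∑ c, cons4 μ z c = 1 := by
  constructor
  · intro c
    exact div_nonneg (Finset.sum_nonneg fun _ _ => Finset.sum_nonneg fun _ _ => hμ _) hZ.le
  · unfold cons4
    rw [← Finset.sum_div]
    exact div_self hZ.ne'

lemma pred4_isDist {C O P : Type*} [Fintype C] [Fintype O] [Fintype P]
    (μ : C × O × P × Bool → ℝ) (hμ : ∀ x, 0 ≤ μ x) (z : Bool) (hZ : 0 < prZ4 μ z) :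
    (∀ p, 0 ≤ pred4 μ z p) ∧ ∑ p, pred4 μ z p = 1 := by
  constructor
  · intro p
    exact div_nonneg (Finset.sum_nonneg fun _ _ => Finset.sum_nonneg fun _ _ => hμ _) hZ.le
  · unfold pred4
    rw [← Finset.sum_div]
    have : ∑ p : P, ∑ c : C, ∑ o : O, μ (c, o, p, z) = prZ4 μ z := by
      unfold prZ4
      rw [Finset.sum_comm]
      exact Finset.sum_congr rfl fun c _ => Finset.sum_comm
    rw [this]
    exact div_self hZ.ne'

lemma prAgree4_le {C O : Type*} [Fintype C] [Fintype O]
    (μ : C × O × C × Bool → ℝ) (hμ : ∀ x, 0 ≤ μ x) (z : Bool) (hZ : 0 < prZ4 μ z) :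
    prAgree4 μ z ≤ 1 - dTV (cons4 μ z) (pred4 μ z) := by
  have hcons := cons4_isDist μ hμ z hZ
  have hpred := pred4_isDist μ hμ z hZ
  rw [← sum_min_eq_one_sub_dTV _ _ hcons.2 hpred.2]
  unfold prAgree4
  rw [Finset.sum_div]
  apply Finset.sum_le_sum
  intro c _
  apply le_min
  · unfold cons4
    apply div_le_div_of_nonneg_right _ hZ.le
    apply Finset.sum_le_sum
    intro o _
    exact Finset.single_le_sum (f := fun p => μ (c, o, p, z)) (fun p _ => hμ _)
      (Finset.mem_univ c)
  · unfold pred4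
    apply div_le_div_of_nonneg_right _ hZ.le
    exact Finset.single_le_sum (f := fun c' => ∑ o, μ (c', o, c, z))
      (fun c' _ => Finset.sum_nonneg fun o _ => hμ _) (Finset.mem_univ c)

/-- If the α-Hybrid worldview holds and the model passes the α'-disparity
test with `α' < α`, then the construct accuracy is at most
`1 - (1/2)(α - α') · dTV(observation | Z=0, observation | Z=1)`. -/
theorem alpha_hybrid_smaller_alpha_test_accuracy_bound
    {C O : Type*} [Fintype C] [Fintype O]
    (α α' : ℝ) (hα'0 : 0 ≤ α') (hαα' : α' < α) (hα1 : α ≤ 1)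
    (μ : C × O × C × Bool → ℝ) (hμ : IsDist μ) (hZ : ∀ z, 0 < prZ4 μ z)
    (hhybrid : dTV (cons4 μ false) (cons4 μ true) = α * dTV (obs4 μ false) (obs4 μ true))
    (htest : dTV (pred4 μ false) (pred4 μ true) ≤ α' * dTV (obs4 μ false) (obs4 μ true)) :
    constructAccuracy4 μ ≤ 1 - (1 / 2) * (α - α') * dTV (obs4 μ false) (obs4 μ true) := by
  obtain ⟨hμ0, _⟩ := hμ
  have h0 := prAgree4_le μ hμ0 false (hZ false)
  have h1 := prAgree4_le μ hμ0 true (hZ true)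
  have htri : dTV (cons4 μ false) (cons4 μ true)
      ≤ dTV (cons4 μ false) (pred4 μ false) + dTV (pred4 μ false) (pred4 μ true)
        + dTV (cons4 μ true) (pred4 μ true) := by
    calc dTV (cons4 μ false) (cons4 μ true)
        ≤ dTV (cons4 μ false) (pred4 μ false) + dTV (pred4 μ false) (cons4 μ true) :=
          dTV_triangle' _ _ _
      _ ≤ dTV (cons4 μ false) (pred4 μ false)
          + (dTV (pred4 μ false) (pred4 μ true) + dTV (pred4 μ true) (cons4 μ true)) := by
          linarith [dTV_triangle' (pred4 μ false) (pred4 μ true) (cons4 μ true)]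
      _ = _ := by rw [dTV_symm' (pred4 μ true) (cons4 μ true)]; ring
  unfold constructAccuracy4
  rw [hhybrid] at htri
  nlinarith [htri, htest, h0, h1]
end

section
/- For every α and α' with 0 ≤ α < α' ≤ 1, there exist finite types C, O, P and a joint distribution μ on C × O × P × Bool (construct, observation, prediction, protected attribute) with Pr[Z = z] > 0 for both z and dTV(observation | Z = 0, observation | Z = 1) > 0, such that the α-Hybrid worldview holds (dTV(construct | Z = 0, construct | Z = 1) = α · dTV(observation | Z = 0, observation | Z = 1)), μ passes the α'-disparity test (dTV(prediction | Z = 0, prediction | Z = 1) ≤ α' · dTV(observation | Z = 0, observation | Z = 1)), and yet μ exhibits disparity amplification: dTV(prediction | Z = 0, prediction | Z = 1) > dTV(construct | Z = 0, construct | Z = 1). -/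
/-- The witness property for STATEMENT 15: a model setting with positive group
probabilities and positive observed disparity in which the α-Hybrid worldview holds,
the α'-disparity test passes, and yet disparity amplification occurs. -/
def HybridTestButAmplifies (C O P : Type) [Fintype C] [Fintype O] [Fintype P]
    (α α' : ℝ) (μ : C × O × P × Bool → ℝ) : Prop :=
  IsDist μ ∧ (∀ z, 0 < prZ4 μ z) ∧
  0 < dTV (obs4 μ false) (obs4 μ true) ∧
  dTV (cons4 μ false) (cons4 μ true) = α * dTV (obs4 μ false) (obs4 μ true) ∧
  dTV (pred4 μ false) (pred4 μ true) ≤ α' * dTV (obs4 μ false) (obs4 μ true) ∧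
  dTV (cons4 μ false) (cons4 μ true) < dTV (pred4 μ false) (pred4 μ true)

/-- For all `0 ≤ α < α' ≤ 1`, there exist finite types and a model
setting in which the α-Hybrid worldview holds and the α'-disparity test passes, yet
the model exhibits disparity amplification. -/
theorem alpha_hybrid_bigger_alpha_test_allows_amplification
    (α α' : ℝ) (hα0 : 0 ≤ α) (hαα' : α < α') (hα'1 : α' ≤ 1) :
    ∃ (C O P : Type) (iC : Fintype C) (iO : Fintype O) (iP : Fintype P)
      (μ : C × O × P × Bool → ℝ), @HybridTestButAmplifies C O P iC iO iP α α' μ := by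
  have hα1 : α ≤ 1 := le_trans hαα'.le hα'1
  have hα'0 : 0 ≤ α' := le_trans hα0 hαα'.le
  set μ : Bool × Bool × Bool × Bool → ℝ := fun x =>
    (if x.2.1 = x.2.2.2 then 1 else 0) *
      ((if x.1 = x.2.2.2 then (1+α)/2 else (1-α)/2) *
       ((if x.2.2.1 = x.2.2.2 then (1+α')/2 else (1-α')/2) / 2)) with hμ
  have hpr : ∀ z, prZ4 μ z = 1/2 := by
    intro z; cases z <;> (simp [prZ4, hμ, Fintype.sum_bool]; ring)
  have hobs : ∀ z o, obs4 μ z o = if o = z then 1 else 0 := by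
    intro z o
    simp only [obs4]; rw [hpr]
    cases z <;> cases o <;> (simp [hμ, Fintype.sum_bool]; try ring)
  have hcons : ∀ z c, cons4 μ z c = if c = z then (1+α)/2 else (1-α)/2 := by
    intro z c
    simp only [cons4]; rw [hpr]
    cases z <;> cases c <;> (simp [hμ, Fintype.sum_bool]; try ring)
  have hpred : ∀ z p, pred4 μ z p = if p = z then (1+α')/2 else (1-α')/2 := by
    intro z p
    simp only [pred4]; rw [hpr]
    cases z <;> cases p <;> (simp [hμ, Fintype.sum_bool]; try ring)
  have hdobs : dTV (obs4 μ false) (obs4 μ true) = 1 := by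
    simp [dTV, hobs, Fintype.sum_bool]; norm_num
  have hdcons : dTV (cons4 μ false) (cons4 μ true) = α := by
    have e1 : cons4 μ false false = (1+α)/2 := by rw [hcons]; simp
    have e2 : cons4 μ true false = (1-α)/2 := by rw [hcons]; simp
    have e3 : cons4 μ false true = (1-α)/2 := by rw [hcons]; simp
    have e4 : cons4 μ true true = (1+α)/2 := by rw [hcons]; simp
    rw [dTV, Fintype.sum_bool, e1, e2, e3, e4,
        show (1+α)/2 - (1-α)/2 = α by ring, show (1-α)/2 - (1+α)/2 = -α by ring,
        abs_neg, abs_of_nonneg hα0]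
    ring
  have hdpred : dTV (pred4 μ false) (pred4 μ true) = α' := by
    have e1 : pred4 μ false false = (1+α')/2 := by rw [hpred]; simp
    have e2 : pred4 μ true false = (1-α')/2 := by rw [hpred]; simp
    have e3 : pred4 μ false true = (1-α')/2 := by rw [hpred]; simp
    have e4 : pred4 μ true true = (1+α')/2 := by rw [hpred]; simp
    rw [dTV, Fintype.sum_bool, e1, e2, e3, e4,
        show (1+α')/2 - (1-α')/2 = α' by ring, show (1-α')/2 - (1+α')/2 = -α' by ring,
        abs_neg, abs_of_nonneg hα'0]
    ring
  refine ⟨Bool, Bool, Bool, inferInstance, inferInstance, inferInstance, μ,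
    ⟨?_, ?_⟩, ?_, ?_, ?_, ?_, ?_⟩
  · rintro ⟨c, o, p, z⟩
    have h1 : (0:ℝ) ≤ 1 - α := by linarith
    have h2 : (0:ℝ) ≤ 1 - α' := by linarith
    simp only [hμ]
    positivity
  · simp [hμ, Fintype.sum_prod_type, Fintype.sum_bool]; ring
  · intro z; rw [hpr]; norm_num
  · rw [hdobs]; norm_num
  · rw [hdcons, hdobs]; ring
  · rw [hdpred, hdobs]; linarith
  · rw [hdcons, hdpred]; exact hαα'
end
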